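/- For the van der Corput function ψ, for any z₀ ∈ ℤ_{≥0}, z ∈ ℤ_{>0}, and 0 ≤ x < y < 1: | |{j ∈ [z₀, z₀+z) : ψ(j) ∈ [x,y)}|/z − (y−x) | < (2⌊lg z⌋ + 2)/z. -/

import Mathlib

open Finset

/-- The van der Corput function `ψ`: binary digit reversal of the index.
(For `i ≥ 1` all binary digits of `i` have index `< i`, so summing over
`j < i` captures the full expansion; `ψ 0 = 0`.) -/
noncomputable def vdc (i : ℕ) : ℝ :=
  ∑ j ∈ Finset.range i, if i.testBit j then ((1 : ℝ) / 2) ^ (j + 1) else 0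

/-!
Writing `j = b * 2 ^ k + r` with `r < 2 ^ k`, one has `2 ^ k ψ(j) = 2 ^ k ψ(r) + ψ(b)`, where
`2 ^ k ψ(r)` is an integer below `2 ^ k` that determines `r`, and `ψ(b) ∈ [0, 1)`. Among `2 ^ k`
consecutive integers the residues `r` are all distinct, so exactly one of them has `ψ(j)` in each
cell `[m / 2 ^ k, (m + 1) / 2 ^ k)`, and the number with `ψ(j) ∈ [x, y)` differs from
`2 ^ k (y - x)` by less than one at each endpoint. A window of length `z` splits into at most
`⌊lg z⌋ + 1` such windows, one for each binary digit `1` of `z`.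
-/

lemma vdc_eq_sum_range {i n : ℕ} (h : i < 2 ^ n) :
    vdc i = ∑ j ∈ range n, if i.testBit j then ((1 : ℝ) / 2) ^ (j + 1) else 0 := by
  have hvanish : ∀ m, i < 2 ^ m → ∀ j ∈ range (max i n), j ∉ range m →
      (if i.testBit j then ((1 : ℝ) / 2) ^ (j + 1) else 0) = 0 := by
    intro m hm j _ hj
    rw [Nat.testBit_lt_two_pow (hm.trans_le (Nat.pow_le_pow_right two_pos (by simpa using hj)))]
    rfl
  rw [vdc, sum_subset (range_subset_range.2 (le_max_left i n)) (hvanish i i.lt_two_pow_self),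
    ← sum_subset (range_subset_range.2 (le_max_right i n)) (hvanish n h)]

lemma vdc_zero : vdc 0 = 0 := by simp [vdc]

lemma vdc_eq_mod_two_add_vdc_div_two (i : ℕ) : vdc i = ((i % 2 : ℕ) + vdc (i / 2)) / 2 := by
  obtain ⟨n, hn⟩ : ∃ n, i / 2 < 2 ^ n := ⟨_, Nat.lt_two_pow_self⟩
  have hi : i < 2 ^ (n + 1) := by rw [pow_succ]; omega
  rw [vdc_eq_sum_range hi, vdc_eq_sum_range hn, sum_range_succ', add_div, sum_div, add_comm]
  congr 1
  · rcases Nat.mod_two_eq_zero_or_one i with h | h <;> simp [Nat.testBit_zero, h]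
  · refine sum_congr rfl fun j _ => ?_
    rw [Nat.testBit_div_two]
    split_ifs <;> ring

lemma vdc_nonneg (i : ℕ) : 0 ≤ vdc i :=
  sum_nonneg fun _ _ => by split_ifs <;> positivity

lemma vdc_lt_one (i : ℕ) : vdc i < 1 := by
  induction i using Nat.strong_induction_on with
  | _ i ih =>
    rcases Nat.eq_zero_or_pos i with rfl | hi
    · simp [vdc_zero]
    · have hbit : ((i % 2 : ℕ) : ℝ) ≤ 1 := by
        exact_mod_cast Nat.le_of_lt_succ (Nat.mod_lt i two_pos)
      rw [vdc_eq_mod_two_add_vdc_div_two]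
      linarith [ih (i / 2) (Nat.div_lt_self hi one_lt_two)]

lemma vdc_mul_two_pow_add (b : ℕ) {k r : ℕ} (hr : r < 2 ^ k) :
    vdc (b * 2 ^ k + r) = vdc r + vdc b / 2 ^ k := by
  induction k generalizing r with
  | zero =>
    obtain rfl : r = 0 := by simpa using hr
    simp [vdc_zero]
  | succ k ih =>
    have hpow : b * 2 ^ (k + 1) = 2 * (b * 2 ^ k) := by ring
    rw [pow_succ] at hr
    rw [vdc_eq_mod_two_add_vdc_div_two, vdc_eq_mod_two_add_vdc_div_two r,
      show (b * 2 ^ (k + 1) + r) % 2 = r % 2 by omega,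
      show (b * 2 ^ (k + 1) + r) / 2 = b * 2 ^ k + r / 2 by omega, ih (by omega)]
    ring

lemma exists_two_pow_mul_vdc_eq_natCast {k r : ℕ} (hr : r < 2 ^ k) :
    ∃ m : ℕ, (2 : ℝ) ^ k * vdc r = m := by
  induction k generalizing r with
  | zero =>
    obtain rfl : r = 0 := by simpa using hr
    exact ⟨0, by simp [vdc_zero]⟩
  | succ k ih =>
    rw [pow_succ] at hr
    obtain ⟨m, hm⟩ := ih (r := r / 2) (by omega)
    refine ⟨2 ^ k * (r % 2) + m, ?_⟩
    rw [vdc_eq_mod_two_add_vdc_div_two, pow_succ]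
    push_cast
    rw [← hm]
    ring

lemma natCast_floor_two_pow_mul_vdc (j k : ℕ) :
    (⌊(2 : ℝ) ^ k * vdc j⌋₊ : ℝ) = 2 ^ k * vdc (j % 2 ^ k) := by
  have hr := Nat.mod_lt j (Nat.two_pow_pos k)
  obtain ⟨m, hm⟩ := exists_two_pow_mul_vdc_eq_natCast hr
  have hsplit : (2 : ℝ) ^ k * vdc j = vdc (j / 2 ^ k) + m := by
    conv_lhs => rw [← Nat.div_add_mod' j (2 ^ k)]
    rw [vdc_mul_two_pow_add _ hr, mul_add, hm, mul_div_cancel₀ _ (by positivity)]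
    ring
  rw [hsplit, Nat.floor_add_natCast (vdc_nonneg _), Nat.floor_eq_zero.2 (vdc_lt_one _), zero_add,
    hm]

lemma vdc_injective : Function.Injective vdc := by
  suffices h : ∀ k r s, r < 2 ^ k → s < 2 ^ k → vdc r = vdc s → r = s from
    fun r s hrs => h (r + s) r s
      (r.lt_two_pow_self.trans_le (Nat.pow_le_pow_right two_pos (Nat.le_add_right r s)))
      (s.lt_two_pow_self.trans_le (Nat.pow_le_pow_right two_pos (Nat.le_add_left s r))) hrs
  intro k
  induction k with
  | zero => intro r s hr hs _; omega
  | succ k ih =>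
    intro r s hr hs hrs
    rw [pow_succ] at hr hs
    rw [vdc_eq_mod_two_add_vdc_div_two r, vdc_eq_mod_two_add_vdc_div_two s] at hrs
    -- `r % 2` is the integer part of `2 ψ(r)`
    have hmod : r % 2 = s % 2 := by
      have := vdc_lt_one (r / 2); have := vdc_lt_one (s / 2)
      have := vdc_nonneg (r / 2); have := vdc_nonneg (s / 2)
      rcases Nat.mod_two_eq_zero_or_one r with hr2 | hr2 <;>
        rcases Nat.mod_two_eq_zero_or_one s with hs2 | hs2 <;>
        simp only [hr2, hs2, Nat.cast_zero, Nat.cast_one] at hrs ⊢ <;> linarith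
    have hdiv : r / 2 = s / 2 := ih _ _ (by omega) (by omega) (by rw [hmod] at hrs; linarith)
    omega

lemma card_filter_comp_eq_of_bijOn {ι κ : Type*} {s : Finset ι} {t : Finset κ} {c : ι → κ}
    (hc : Set.BijOn c s t) (P : κ → Prop) [DecidablePred P] :
    #{i ∈ s | P (c i)} = #{m ∈ t | P m} := by
  refine card_nbij c (fun i hi => ?_) (hc.injOn.mono fun i hi => ?_) (fun m hm => ?_)
  · simp only [coe_filter, Set.mem_ofPred_eq] at hi ⊢
    exact ⟨hc.mapsTo hi.1, hi.2⟩
  · exact (mem_filter.1 hi).1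
  · simp only [coe_filter, Set.mem_ofPred_eq] at hm
    obtain ⟨i, hi, rfl⟩ := hc.surjOn hm.1
    exact ⟨i, by simpa using ⟨hi, hm.2⟩, rfl⟩

section CellCount

variable {ι : Type*} {s : Finset ι} {N : ℕ} {p : ι → ℝ}

lemma abs_card_filter_lt_sub_lt_one (hp : ∀ i ∈ s, 0 ≤ p i)
    (hcell : Set.BijOn (fun i => ⌊N * p i⌋₊) s (range N)) {t : ℝ} (ht₀ : 0 ≤ t) (ht₁ : t ≤ 1) :
    |(#{i ∈ s | p i < t} : ℝ) - N * t| < 1 := by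
  -- the point in cell `m` lies below `t` if `m + 1 ≤ N t`, and only if `m < N t`
  have hupper : #{i ∈ s | p i < t} ≤ ⌈N * t⌉₊ := calc
    #{i ∈ s | p i < t} ≤ #{i ∈ s | (⌊N * p i⌋₊ : ℝ) < N * t} := by
      refine card_le_card fun i => ?_
      simp only [mem_filter, and_imp]
      refine fun hi hpt =>
        ⟨hi, (Nat.floor_le (mul_nonneg N.cast_nonneg (hp i hi))).trans_lt ?_⟩
      have hN : 0 < N := Nat.zero_lt_of_lt (mem_range.1 (hcell.mapsTo hi))
      exact mul_lt_mul_of_pos_left hpt (Nat.cast_pos.2 hN)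
    _ = #((range N).filter fun m : ℕ => (m : ℝ) < N * t) :=
      card_filter_comp_eq_of_bijOn hcell fun m : ℕ => (m : ℝ) < N * t
    _ ≤ #(range ⌈N * t⌉₊) := card_le_card fun m => by simp [Nat.lt_ceil]
    _ = ⌈N * t⌉₊ := card_range _
  have hlower : ⌊N * t⌋₊ ≤ #{i ∈ s | p i < t} := calc
    ⌊N * t⌋₊ = #(range ⌊N * t⌋₊) := (card_range _).symm
    _ ≤ #((range N).filter fun m : ℕ => (m : ℝ) + 1 ≤ N * t) := by
      refine card_le_card fun m => ?_
      simp only [mem_range, mem_filter]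
      intro hm
      have hfloor : ⌊N * t⌋₊ ≤ N :=
        Nat.floor_le_of_le (mul_le_of_le_one_right N.cast_nonneg ht₁)
      refine ⟨hm.trans_le hfloor, ?_⟩
      exact_mod_cast (Nat.le_floor_iff (by positivity)).1 hm
    _ = #{i ∈ s | (⌊N * p i⌋₊ : ℝ) + 1 ≤ N * t} :=
      (card_filter_comp_eq_of_bijOn hcell fun m : ℕ => (m : ℝ) + 1 ≤ N * t).symm
    _ ≤ #{i ∈ s | p i < t} := by
      refine card_le_card fun i => ?_
      simp only [mem_filter, and_imp]
      exact fun hi hpt =>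
        ⟨hi, lt_of_mul_lt_mul_left ((Nat.lt_floor_add_one _).trans_le hpt) N.cast_nonneg⟩
  have := Nat.ceil_lt_add_one (mul_nonneg N.cast_nonneg ht₀)
  have := Nat.sub_one_lt_floor ((N : ℝ) * t)
  have hupper' : (#{i ∈ s | p i < t} : ℝ) ≤ ⌈N * t⌉₊ := by exact_mod_cast hupper
  have hlower' : (⌊N * t⌋₊ : ℝ) ≤ #{i ∈ s | p i < t} := by exact_mod_cast hlower
  rw [abs_lt]
  constructor <;> linarith

lemma abs_card_filter_mem_Ico_sub_lt_two (hp : ∀ i ∈ s, 0 ≤ p i)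
    (hcell : Set.BijOn (fun i => ⌊N * p i⌋₊) s (range N)) {x y : ℝ} (hx : 0 ≤ x) (hxy : x ≤ y)
    (hy : y ≤ 1) : |(#{i ∈ s | x ≤ p i ∧ p i < y} : ℝ) - N * (y - x)| < 2 := by
  classical
  have hsplit : #{i ∈ s | p i < y} = #{i ∈ s | p i < x} + #{i ∈ s | x ≤ p i ∧ p i < y} := by
    rw [← card_union_of_disjoint (disjoint_filter.2 fun i _ hlt hmem => hlt.not_ge hmem.1)]
    congr 1
    ext i
    simp only [mem_filter, mem_union]
    constructor
    · rintro ⟨hi, hpy⟩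
      exact (lt_or_ge (p i) x).imp (⟨hi, ·⟩) (⟨hi, ·, hpy⟩)
    · rintro (⟨hi, hpx⟩ | ⟨hi, -, hpy⟩)
      exacts [⟨hi, hpx.trans_le hxy⟩, ⟨hi, hpy⟩]
  have hy' := abs_card_filter_lt_sub_lt_one hp hcell (hx.trans hxy) hy
  have hx' := abs_card_filter_lt_sub_lt_one hp hcell hx (hxy.trans hy)
  rw [hsplit, Nat.cast_add] at hy'
  rw [abs_lt] at hx' hy' ⊢
  constructor <;> linarith [hx'.1, hx'.2, hy'.1, hy'.2]

end CellCount

lemma bijOn_floor_two_pow_mul_vdc (a k : ℕ) :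
    Set.BijOn (fun j => ⌊(2 : ℝ) ^ k * vdc j⌋₊) (Ico a (a + 2 ^ k)) (range (2 ^ k)) := by
  have hmaps :
      Set.MapsTo (fun j => ⌊(2 : ℝ) ^ k * vdc j⌋₊) (Ico a (a + 2 ^ k)) (range (2 ^ k)) := by
    intro j _
    rw [coe_range, Set.mem_Iio, Nat.floor_lt (mul_nonneg (by positivity) (vdc_nonneg j))]
    push_cast
    exact mul_lt_of_lt_one_right (by positivity) (vdc_lt_one j)
  have hinj : Set.InjOn (fun j => ⌊(2 : ℝ) ^ k * vdc j⌋₊) (Ico a (a + 2 ^ k)) := by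
    intro j hj j' hj' h
    have h' := congrArg (fun m : ℕ => (m : ℝ)) h
    simp only [natCast_floor_two_pow_mul_vdc] at h'
    exact Nat.mod_injOn_Ico a (2 ^ k) hj hj'
      (vdc_injective (mul_left_cancel₀ (by positivity) h'))
  exact ⟨hmaps, hinj, surjOn_of_injOn_of_card_le _ hmaps hinj (by simp)⟩

noncomputable def vdcCount (x y : ℝ) (a n : ℕ) : ℕ :=
  #{j ∈ Ico a (a + n) | x ≤ vdc j ∧ vdc j < y}

section Window

variable {x y : ℝ}

lemma vdcCount_zero (a : ℕ) : vdcCount x y a 0 = 0 := by simp [vdcCount]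

lemma vdcCount_add (a m n : ℕ) :
    vdcCount x y a (m + n) = vdcCount x y a m + vdcCount x y (a + m) n := by
  simp only [vdcCount, card_filter]
  rw [← add_assoc, sum_Ico_consecutive _ (Nat.le_add_right a m) (Nat.le_add_right _ n)]

lemma abs_vdcCount_two_pow_sub_lt_two (hx : 0 ≤ x) (hxy : x ≤ y) (hy : y ≤ 1) (a k : ℕ) :
    |(vdcCount x y a (2 ^ k) : ℝ) - 2 ^ k * (y - x)| < 2 := by
  have hcell : Set.BijOn (fun j => ⌊((2 ^ k : ℕ) : ℝ) * vdc j⌋₊) (Ico a (a + 2 ^ k))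
      (range (2 ^ k)) := by
    simpa using bijOn_floor_two_pow_mul_vdc a k
  simpa [vdcCount] using
    abs_card_filter_mem_Ico_sub_lt_two (fun j _ => vdc_nonneg j) hcell hx hxy hy

lemma abs_vdcCount_sub_lt_two_mul_log_add_two (hx : 0 ≤ x) (hxy : x ≤ y) (hy : y ≤ 1) (a : ℕ)
    {z : ℕ} (hz : 0 < z) :
    |(vdcCount x y a z : ℝ) - z * (y - x)| < 2 * Nat.log 2 z + 2 := by
  induction z using Nat.strong_induction_on generalizing a with
  | _ z ih =>
    have hk : 2 ^ Nat.log 2 z ≤ z := Nat.pow_log_le_self 2 hz.ne'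
    have hk' : z < 2 ^ Nat.log 2 z * 2 :=
      pow_succ 2 _ ▸ Nat.lt_pow_succ_log_self one_lt_two z
    generalize Nat.log 2 z = k at hk hk' ⊢
    obtain ⟨m, rfl⟩ := Nat.exists_eq_add_of_le hk
    have hblock := abs_vdcCount_two_pow_sub_lt_two hx hxy hy a k
    have hsplit : (vdcCount x y a (2 ^ k + m) : ℝ) - ↑(2 ^ k + m) * (y - x) =
        ((vdcCount x y a (2 ^ k) : ℝ) - 2 ^ k * (y - x)) +
          ((vdcCount x y (a + 2 ^ k) m : ℝ) - m * (y - x)) := by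
      rw [vdcCount_add]
      push_cast
      ring
    rw [hsplit]
    refine (abs_add_le _ _).trans_lt ?_
    rcases Nat.eq_zero_or_pos m with rfl | hm
    · simp only [vdcCount_zero, CharP.cast_eq_zero, zero_mul, sub_zero, abs_zero, add_zero]
      linarith [(Nat.cast_nonneg k : (0 : ℝ) ≤ k)]
    · have hlog : Nat.log 2 m + 1 ≤ k := Nat.log_lt_of_lt_pow hm.ne' (by omega)
      have hrest := ih m (by omega) (a + 2 ^ k) hm
      have hlog' : (Nat.log 2 m : ℝ) + 1 ≤ k := by exact_mod_cast hlog
      linarith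

end Window

/-- `| |{j ∈ [z₀, z₀+z) : ψ(j) ∈ [x,y)}|/z − (y−x) | < (2⌊lg z⌋ + 2)/z`. -/
theorem stmt_18 : ∀ (z₀ z : ℕ) (x y : ℝ), 0 < z → 0 ≤ x → x < y → y < 1 →
    |((((Finset.Ico z₀ (z₀ + z)).filter
        fun j => x ≤ vdc j ∧ vdc j < y).card : ℝ) / z - (y - x))| <
      (2 * (Nat.log 2 z : ℝ) + 2) / z := by
  intro z₀ z x y hz hx hxy hy
  have hzR : (0 : ℝ) < z := Nat.cast_pos.2 hz
  rw [div_sub' hzR.ne', abs_div, abs_of_pos hzR]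
  exact div_lt_div_of_pos_right (abs_vdcCount_sub_lt_two_mul_log_add_two hx hxy.le hy.le z₀ hz) hzR
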